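/- arXiv:1906.06456 — 2 statements merged into one kernel-verified Lean document; each statement's English description precedes it below -/
import Mathlib

section
/- Let C, M > 0 and define g(θ) := C·(exp(θM) − θM − 1)/M² for θ ≥ 0. Then for every x ≥ 0 the monotone conjugate g^⊙(x) := sup_{θ ≥ 0} (θx − g(θ)) equals ((x + C/M)/M)·log(1 + M·x/C) − x/M. -/
/-!
After the substitution `u = θ M`, `t = M x / C` the objective becomes `C / M ^ 2` times
`u t - (exp u - u - 1)`, so it suffices to compute the conjugate of `exp u - u - 1`. Writing
`L = log (1 + t)`, the tangent-line bound `exp (u - L) ≥ u - L + 1` gives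
`exp u ≥ (1 + t) (u - L + 1)`, i.e. `u t - (exp u - u - 1) ≤ (1 + t) L - t`, with equality at `u = L`.
-/

open Real

lemma mul_sub_exp_sub_sub_one_le (u : ℝ) {t : ℝ} (ht : -1 < t) :
    u * t - (exp u - u - 1) ≤ (1 + t) * log (1 + t) - t := by
  have hpos : 0 < 1 + t := by linarith
  have htangent : (1 + t) * (u - log (1 + t) + 1) ≤ exp u := by
    calc (1 + t) * (u - log (1 + t) + 1)
        ≤ (1 + t) * exp (u - log (1 + t)) :=
          mul_le_mul_of_nonneg_left (by linarith [add_one_le_exp (u - log (1 + t))]) hpos.le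
      _ = exp u := by rw [exp_sub, exp_log hpos]; field_simp
  linarith

lemma isGreatest_mul_sub_exp_sub_sub_one {t : ℝ} (ht : 0 ≤ t) :
    IsGreatest {y | ∃ u, 0 ≤ u ∧ y = u * t - (exp u - u - 1)}
      ((1 + t) * log (1 + t) - t) := by
  have hpos : 0 < 1 + t := by linarith
  refine ⟨⟨log (1 + t), log_nonneg (by linarith), ?_⟩, ?_⟩
  · rw [exp_log hpos]; ring
  · rintro y ⟨u, -, rfl⟩
    exact mul_sub_exp_sub_sub_one_le u (by linarith)

theorem stmt4 (C M : ℝ) (hC : 0 < C) (hM : 0 < M) (x : ℝ) (hx : 0 ≤ x) :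
    IsLUB {y : ℝ | ∃ θ : ℝ, 0 ≤ θ ∧ y = θ * x - C * (Real.exp (θ * M) - θ * M - 1) / M ^ 2}
      (((x + C / M) / M) * Real.log (1 + M * x / C) - x / M) := by
  set t := M * x / C with ht
  have hscaled := (isGreatest_mul_sub_exp_sub_sub_one (t := t) (by positivity)).isLUB.mul_left
    (a := C / M ^ 2) (by positivity)
  have hset : (fun y => C / M ^ 2 * y) '' {y | ∃ u, 0 ≤ u ∧ y = u * t - (exp u - u - 1)} =
      {y | ∃ θ, 0 ≤ θ ∧ y = θ * x - C * (exp (θ * M) - θ * M - 1) / M ^ 2} := by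
    ext y
    simp only [Set.mem_image, Set.mem_ofPred_eq]
    constructor
    · rintro ⟨_, ⟨u, hu, rfl⟩, rfl⟩
      refine ⟨u / M, by positivity, ?_⟩
      rw [div_mul_cancel₀ u hM.ne', ht]
      field_simp
    · rintro ⟨θ, hθ, rfl⟩
      refine ⟨_, ⟨θ * M, by positivity, rfl⟩, ?_⟩
      rw [ht]
      field_simp
  have hvalue : C / M ^ 2 * ((1 + t) * log (1 + t) - t) =
      (x + C / M) / M * log (1 + t) - x / M := by
    rw [ht]
    field_simp
    ring
  rwa [hset, hvalue] at hscaled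
end

section
/- Let (Ω, F, P) be a probability space, G a sub-σ-algebra, and let π be a random variable and α ≤ β real constants with α ≤ π ≤ β almost surely and 0 ≤ α. Suppose moreover α ≤ E[π | G] almost surely. Then, almost surely on the event {E[π | G] > 0}, one has E[π² | G]/E[π | G] − E[π | G] ≤ β − α. -/
open MeasureTheory in
theorem stmt9 {Ω : Type*} (G : MeasurableSpace Ω) {F : MeasurableSpace Ω} (μ : Measure Ω) [IsProbabilityMeasure μ]
    (hGF : G ≤ F) (π : Ω → ℝ) (hπ : AEStronglyMeasurable π μ)
    (α β : ℝ) (hαβ : α ≤ β) (hα0 : 0 ≤ α)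
    (hlb : ∀ᵐ ω ∂μ, α ≤ π ω) (hub : ∀ᵐ ω ∂μ, π ω ≤ β)
    (hclb : ∀ᵐ ω ∂μ, α ≤ (μ[π | G]) ω) :
    ∀ᵐ ω ∂μ, 0 < (μ[π | G]) ω →
      (μ[fun ω => π ω ^ 2 | G]) ω / (μ[π | G]) ω - (μ[π | G]) ω ≤ β - α := by
  have hβ0 : 0 ≤ β := hα0.trans hαβ
  have hπint : Integrable π μ := by
    refine Integrable.mono' (integrable_const β) hπ ?_
    filter_upwards [hlb, hub] with ω h1 h2
    rw [Real.norm_eq_abs, abs_le]; exact ⟨by linarith, h2⟩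
  have hsqint : Integrable (fun ω => π ω ^ 2) μ := by
    refine Integrable.mono' (integrable_const (β ^ 2)) (hπ.pow 2) ?_
    filter_upwards [hlb, hub] with ω h1 h2
    rw [Real.norm_eq_abs, abs_le]
    constructor <;> nlinarith
  have hgint : Integrable (fun ω => (α + β) * π ω - α * β) μ :=
    (hπint.const_mul _).sub (integrable_const _)
  have hmono : μ[fun ω => π ω ^ 2 | G] ≤ᵐ[μ] μ[fun ω => (α + β) * π ω - α * β | G] := by
    refine condExp_mono hsqint hgint ?_
    filter_upwards [hlb, hub] with ω h1 h2
    nlinarith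
  have heq : μ[fun ω => (α + β) * π ω - α * β | G] =ᵐ[μ]
      fun ω => (α + β) * (μ[π | G]) ω - α * β := by
    have h1 : μ[fun ω => (α + β) * π ω - α * β | G] =ᵐ[μ]
        μ[fun ω => (α + β) * π ω | G] - μ[fun _ => α * β | G] :=
      condExp_sub (hπint.const_mul _) (integrable_const _) G
    have h2 : μ[fun ω => (α + β) * π ω | G] =ᵐ[μ] (α + β) • μ[π | G] := by
      exact condExp_smul (μ := μ) (m := G) (α + β) π
    have h3 : μ[fun _ : Ω => α * β | G] = fun _ => α * β := condExp_const hGF _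
    filter_upwards [h1, h2] with ω hω hω2
    simp only [Pi.sub_apply, hω2, h3, Pi.smul_apply, smul_eq_mul] at hω
    simpa using hω
  filter_upwards [hmono, heq, hclb] with ω h1 h2 h3 hpos
  rw [h2] at h1
  rw [sub_le_iff_le_add, div_le_iff₀ hpos]
  nlinarith [sq_nonneg ((μ[π | G]) ω - α), h1]
end
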